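/- For every alphabet Σ and every natural number n ≥ 1, there exist n NFAs A₁, …, Aₙ, each with exactly six states, over the alphabet Σ ∪ {a₁, …, aₙ} (where a₁, …, aₙ are fresh events not in Σ), such that the projection to Σ of the language recognized by the parallel composition Aₙ ‖ ⋯ ‖ A₁ equals Σ^{2ⁿ−1}, the set of all words over Σ of length exactly 2ⁿ − 1. -/

import Mathlib

/-- An NFA with marked states. -/
structure NFAm (Q E : Type) where
  δ : Q → E → Set Q
  I : Set Q
  F : Set Q

/-- Extended transition function on sets of states. -/
def NFAm.run {Q E : Type} (A : NFAm Q E) : List E → Set Q → Set Q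
  | [], S => S
  | a :: w, S => A.run w {q | ∃ p ∈ S, q ∈ A.δ p a}

/-- The language recognized (marked) by the automaton. -/
def NFAm.Lm {Q E : Type} (A : NFAm Q E) : Set (List E) :=
  {w | (A.run w A.I ∩ A.F).Nonempty}

/-- Fully synchronous product of a family of NFAs over a common alphabet. -/
def prodN {n : ℕ} {E : Type} {Qs : Fin n → Type} (A : ∀ i, NFAm (Qs i) E) :
    NFAm (∀ i, Qs i) E where
  δ := fun p a => {q | ∀ i, q i ∈ (A i).δ (p i) a}
  I := {p | ∀ i, p i ∈ (A i).I}
  F := {p | ∀ i, p i ∈ (A i).F}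

/-- Natural projection of a word over `Σ ⊕ Γ` to `Σ` (erasing the `Γ`-events). -/
def projL {E F : Type} : List (E ⊕ F) → List E :=
  List.filterMap (Sum.elim some fun _ => none)

/-- Natural projection of a word over `Σ ⊕ Γ` to `Γ` (erasing the `Σ`-events). -/
def projR {E F : Type} : List (E ⊕ F) → List F :=
  List.filterMap (Sum.elim (fun _ => none) some)


/-! Component `i` stores bit `i` of a binary counter. In the product, an event `aⱼ` is possible
only when `j` is the lowest zero bit, and it then sets bit `j` and clears the bits below it, i.e.
it adds one to the counter. Each `aⱼ` must be followed by exactly one letter of `Sig`, and no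
letter of `Sig` can be read otherwise. An accepted word therefore counts from `0` (all components
initial) to `2ⁿ - 1` (all components marked), reading one letter of `Sig` per increment. -/

namespace NFAm

variable {Q E : Type} (A : NFAm Q E)

theorem run_empty : ∀ w : List E, A.run w ∅ = ∅
  | [] => rfl
  | e :: w => by simpa [run] using run_empty w

theorem run_cons_singleton (p : Q) (e : E) (w : List E) :
    A.run (e :: w) {p} = A.run w (A.δ p e) := by
  simp [run]

def AcceptsFrom (p : Q) (w : List E) : Prop :=
  (A.run w {p} ∩ A.F).Nonempty

variable {A}

theorem acceptsFrom_nil {p : Q} : A.AcceptsFrom p [] ↔ p ∈ A.F := by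
  simp [AcceptsFrom, run]

theorem not_acceptsFrom_cons_of_δ_eq_empty {p : Q} {e : E} (h : A.δ p e = ∅) (w : List E) :
    ¬ A.AcceptsFrom p (e :: w) := by
  simp [AcceptsFrom, run_cons_singleton, h, run_empty]

theorem acceptsFrom_cons_of_δ_eq_singleton {p q : Q} {e : E} (h : A.δ p e = {q}) (w : List E) :
    A.AcceptsFrom p (e :: w) ↔ A.AcceptsFrom q w := by
  rw [AcceptsFrom, run_cons_singleton, h, AcceptsFrom]

theorem Lm_eq_of_I_eq_singleton {p : Q} (h : A.I = {p}) : A.Lm = {w | A.AcceptsFrom p w} := by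
  rw [Lm, h]; rfl

end NFAm

section projL

variable {E F : Type}

@[simp] theorem projL_nil : projL ([] : List (E ⊕ F)) = [] := rfl

@[simp] theorem projL_cons_inl (a : E) (w : List (E ⊕ F)) : projL (.inl a :: w) = a :: projL w :=
  rfl

@[simp] theorem projL_cons_inr (a : F) (w : List (E ⊕ F)) : projL (.inr a :: w) = projL w := rfl

end projL

section prodN

variable {n : ℕ} {E : Type} {Qs : Fin n → Type} {A : ∀ i, NFAm (Qs i) E} {p q : ∀ i, Qs i}
  {e : E}

theorem prodN_δ_eq_singleton (h : ∀ i, (A i).δ (p i) e = {q i}) : (prodN A).δ p e = {q} := by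
  ext q'
  simp [prodN, h, funext_iff]

theorem prodN_δ_eq_empty {i : Fin n} (h : (A i).δ (p i) e = ∅) : (prodN A).δ p e = ∅ :=
  Set.eq_empty_of_forall_notMem fun _ hq => by simpa [h] using hq i

end prodN

namespace BinaryCounter

open Finset

/-- `inl b` stores the bit `b`; `inr (b, b')` is half-way through an event `aⱼ` that changes the
bit from `b` to `b'`, and the next letter of `Sig` completes it. These are the paper's states
`0, 1` and `p = (0,0)`, `q = (1,1)`, `r = (0,1)`, `s = (1,0)`. -/
abbrev State : Type := Bool ⊕ Bool × Bool

variable {Sig : Type} {n : ℕ}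

def trans (i : Fin n) : State → Sig ⊕ Fin n → Set State
  | .inl b, .inr j =>
      if j < i then {.inr (b, b)}
      else if j = i then (if b then ∅ else {.inr (false, true)})
      else (if b then {.inr (true, false)} else ∅)
  | .inr (_, b'), .inl _ => {.inl b'}
  | _, _ => ∅

def component (i : Fin n) : NFAm State (Sig ⊕ Fin n) := ⟨trans i, {.inl false}, {.inl true}⟩

variable (Sig n) in
def counter : NFAm (Fin n → State) (Sig ⊕ Fin n) := prodN component

def stable (b : ℕ → Bool) : Fin n → State := fun i => .inl (b i)

def pending (b b' : ℕ → Bool) : Fin n → State := fun i => .inr (b i, b' i)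

def Enabled (j : ℕ) (b : ℕ → Bool) : Prop := b j = false ∧ ∀ i < j, b i = true

def increment (j : ℕ) (b : ℕ → Bool) : ℕ → Bool :=
  fun i => if i < j then false else if i = j then true else b i

def value (n : ℕ) (b : ℕ → Bool) : ℕ := ∑ i ∈ range n, if b i then 2 ^ i else 0

theorem counter_δ_stable_inl (hn : 0 < n) (b : ℕ → Bool) (σ : Sig) :
    (counter Sig n).δ (stable b) (.inl σ) = ∅ :=
  prodN_δ_eq_empty (i := ⟨0, hn⟩) rfl

theorem counter_δ_pending_inr (hn : 0 < n) (b b' : ℕ → Bool) (j : Fin n) :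
    (counter Sig n).δ (pending b b') (.inr j) = ∅ :=
  prodN_δ_eq_empty (i := ⟨0, hn⟩) rfl

theorem counter_δ_pending_inl (b b' : ℕ → Bool) (σ : Sig) :
    (counter Sig n).δ (pending b b') (.inl σ) = {stable b'} :=
  prodN_δ_eq_singleton fun _ => rfl

theorem counter_δ_stable_inr_of_enabled {b : ℕ → Bool} {j : Fin n} (h : Enabled j b) :
    (counter Sig n).δ (stable b) (.inr j) = {pending b (increment j b)} := by
  refine prodN_δ_eq_singleton fun i => ?_
  obtain ⟨hj, hlow⟩ := h
  rcases lt_trichotomy i j with hij | rfl | hij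
  · have hij' : (i : ℕ) < j := hij
    simp [component, trans, stable, pending, increment, hij.not_gt, hij.ne', hij', hlow i hij']
  · simp [component, trans, stable, pending, increment, hj]
  · have hij' : (j : ℕ) < i := hij
    simp [component, trans, stable, pending, increment, hij, hij'.not_gt, hij'.ne']

theorem counter_δ_stable_inr_of_not_enabled {b : ℕ → Bool} {j : Fin n} (h : ¬ Enabled j b) :
    (counter Sig n).δ (stable b) (.inr j) = ∅ := by
  simp only [Enabled, not_and, not_forall, Bool.not_eq_true, exists_prop] at h
  cases hj : b j
  · obtain ⟨i, hij, hi⟩ := h hj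
    refine prodN_δ_eq_empty (i := ⟨i, hij.trans j.isLt⟩) ?_
    have hij' : (⟨i, hij.trans j.isLt⟩ : Fin n) < j := hij
    simp [component, trans, stable, hi, hij'.not_gt, hij'.ne']
  · refine prodN_δ_eq_empty (i := j) ?_
    simp [component, trans, stable, hj]

theorem stable_mem_F_iff {b : ℕ → Bool} :
    stable b ∈ (counter Sig n).F ↔ ∀ i < n, b i = true := by
  simp [counter, prodN, component, stable, Fin.forall_iff]

theorem pending_not_mem_F (hn : 0 < n) (b b' : ℕ → Bool) : pending b b' ∉ (counter Sig n).F :=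
  fun h => by simpa [pending, component] using h ⟨0, hn⟩

theorem counter_I : (counter Sig n).I = {stable fun _ => false} := by
  ext p
  simp [counter, prodN, component, stable, funext_iff]

theorem value_add_value_not (n : ℕ) (b : ℕ → Bool) :
    value n b + value n (fun i => !b i) = 2 ^ n - 1 := by
  have hgeom : ∑ i ∈ range n, 2 ^ i = 2 ^ n - 1 := by simpa using Nat.geomSum_eq le_rfl n
  rw [value, value, ← sum_add_distrib, ← hgeom]
  exact sum_congr rfl fun i _ => by cases b i <;> simp

theorem value_eq_two_pow_sub_one_iff {b : ℕ → Bool} :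
    value n b = 2 ^ n - 1 ↔ ∀ i < n, b i = true := by
  have hcompl := value_add_value_not n b
  rw [show value n b = 2 ^ n - 1 ↔ value n (fun i => !b i) = 0 by omega, value,
    sum_eq_zero_iff]
  simp

theorem value_succ (n : ℕ) (b : ℕ → Bool) :
    value (n + 1) b = value n b + if b n then 2 ^ n else 0 :=
  sum_range_succ _ _

theorem value_increment {j : ℕ} {b : ℕ → Bool} (hj : j < n) (h : Enabled j b) :
    value n (increment j b) = value n b + 1 := by
  induction n, hj using Nat.le_induction with
  | base =>
    have hlow : value j b = 2 ^ j - 1 := value_eq_two_pow_sub_one_iff.mpr h.2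
    have hzero : value j (increment j b) = 0 :=
      sum_eq_zero fun i hi => by simp [increment, mem_range.mp hi]
    have := Nat.one_le_two_pow (n := j)
    simp only [value_succ, hlow, hzero, h.1]
    simp only [increment, lt_self_iff_false, ↓reduceIte, zero_add, Bool.false_eq_true, add_zero]
    omega
  | succ m hm ih =>
    simp only [value_succ, ih]
    simp only [increment, show ¬ m < j by omega, show m ≠ j by omega, ↓reduceIte]
    ring

theorem value_false (n : ℕ) : value n (fun _ => false) = 0 := by
  simp [value]

theorem exists_enabled {b : ℕ → Bool} (h : ¬ ∀ i < n, b i = true) :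
    ∃ j < n, Enabled j b := by
  classical
  simp only [not_forall, Bool.not_eq_true, exists_prop] at h
  refine ⟨Nat.find h, (Nat.find_spec h).1, (Nat.find_spec h).2, fun i hi => ?_⟩
  simpa [hi.trans (Nat.find_spec h).1] using Nat.find_min h hi

theorem value_add_length_of_acceptsFrom (hn : 0 < n) :
    ∀ (w : List (Sig ⊕ Fin n)) (b : ℕ → Bool), (counter Sig n).AcceptsFrom (stable b) w →
      value n b + (projL w).length = 2 ^ n - 1
  | [], b, h => by
    simpa using value_eq_two_pow_sub_one_iff.mpr (stable_mem_F_iff.mp (NFAm.acceptsFrom_nil.mp h))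
  | .inl σ :: w, b, h => absurd h (NFAm.not_acceptsFrom_cons_of_δ_eq_empty
      (counter_δ_stable_inl hn b σ) w)
  | .inr j :: w, b, h => by
    by_cases hj : Enabled j b
    swap
    · exact absurd h (NFAm.not_acceptsFrom_cons_of_δ_eq_empty
        (counter_δ_stable_inr_of_not_enabled hj) w)
    rw [NFAm.acceptsFrom_cons_of_δ_eq_singleton (counter_δ_stable_inr_of_enabled hj)] at h
    match w, h with
    | [], h => exact absurd (NFAm.acceptsFrom_nil.mp h) (pending_not_mem_F hn _ _)
    | .inr j' :: w, h => exact absurd h (NFAm.not_acceptsFrom_cons_of_δ_eq_empty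
        (counter_δ_pending_inr hn _ _ j') w)
    | .inl σ :: w, h =>
      rw [NFAm.acceptsFrom_cons_of_δ_eq_singleton (counter_δ_pending_inl _ _ σ)] at h
      have hrest := value_add_length_of_acceptsFrom hn w _ h
      rw [value_increment j.isLt hj] at hrest
      simp only [projL_cons_inr, projL_cons_inl, List.length_cons]
      omega

theorem exists_acceptsFrom_of_value_add_length :
    ∀ (u : List Sig) (b : ℕ → Bool), value n b + u.length = 2 ^ n - 1 →
      ∃ w : List (Sig ⊕ Fin n), (counter Sig n).AcceptsFrom (stable b) w ∧ projL w = u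
  | [], b, h =>
    ⟨[], NFAm.acceptsFrom_nil.mpr <| stable_mem_F_iff.mpr <| value_eq_two_pow_sub_one_iff.mp h,
      rfl⟩
  | σ :: u, b, h => by
    have hnot_max : ¬ ∀ i < n, b i = true := fun hmax => by
      simp [value_eq_two_pow_sub_one_iff.mpr hmax] at h
    obtain ⟨j, hjn, hj⟩ := exists_enabled hnot_max
    obtain ⟨w, hacc, hw⟩ := exists_acceptsFrom_of_value_add_length u (increment j b) (by
      simp only [List.length_cons] at h
      rw [value_increment hjn hj]
      omega)
    refine ⟨.inr ⟨j, hjn⟩ :: .inl σ :: w, ?_, by simp [hw]⟩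
    rwa [NFAm.acceptsFrom_cons_of_δ_eq_singleton (counter_δ_stable_inr_of_enabled hj),
      NFAm.acceptsFrom_cons_of_δ_eq_singleton (counter_δ_pending_inl _ _ σ)]

theorem exists_acceptsFrom_and_projL_eq_iff (hn : 0 < n) (u : List Sig) (b : ℕ → Bool) :
    (∃ w : List (Sig ⊕ Fin n), (counter Sig n).AcceptsFrom (stable b) w ∧ projL w = u) ↔
      value n b + u.length = 2 ^ n - 1 :=
  ⟨fun ⟨w, hacc, hw⟩ => hw ▸ value_add_length_of_acceptsFrom hn w b hacc,
    exists_acceptsFrom_of_value_add_length u b⟩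

theorem image_projL_counter_Lm (hn : 0 < n) :
    projL '' (counter Sig n).Lm = {u | u.length = 2 ^ n - 1} := by
  ext u
  simpa [NFAm.Lm_eq_of_I_eq_singleton counter_I, value_false] using
    exists_acceptsFrom_and_projL_eq_iff hn u (fun _ => false)

end BinaryCounter

theorem six_state_counting_automata_general {Sig : Type}
    (n : ℕ) (hn : 1 ≤ n) :
    ∃ (Qs : Fin n → Type) (inst : ∀ i, Fintype (Qs i)),
      (∀ i, @Fintype.card (Qs i) (inst i) = 6) ∧
      ∃ A : ∀ i, NFAm (Qs i) (Sig ⊕ Fin n),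
        projL '' (prodN A).Lm = {w : List Sig | w.length = 2 ^ n - 1} :=
  ⟨fun _ => BinaryCounter.State, fun _ => inferInstance, fun _ => rfl, BinaryCounter.component,
    BinaryCounter.image_projL_counter_Lm hn⟩

/-- for every (finite nonempty) alphabet `Sig` and every `n ≥ 1`
there exist `n` NFAs, each with exactly six states, over `Sig ∪ {a₁, …, aₙ}`
(the fresh events being `Sum.inr j`) whose parallel composition recognizes a
language whose projection to `Sig` is exactly `Sig^{2ⁿ - 1}`. -/
theorem six_state_counting_automata {Sig : Type} [Fintype Sig] [Nonempty Sig]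
    (n : ℕ) (hn : 1 ≤ n) :
    ∃ (Qs : Fin n → Type) (inst : ∀ i, Fintype (Qs i)),
      (∀ i, @Fintype.card (Qs i) (inst i) = 6) ∧
      ∃ A : ∀ i, NFAm (Qs i) (Sig ⊕ Fin n),
        projL '' (prodN A).Lm = {w : List Sig | w.length = 2 ^ n - 1} :=
  six_state_counting_automata_general n hn
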